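/- arXiv:2012.06327 — 2 statements merged into one kernel-verified Lean document; each statement's English description precedes it below -/
import Mathlib

section
/- Let K_3^- be the 2-colored graph on vertex set {1,2,3} with red edges {12, 13, 23} and blue edges {12, 13}. Then π_n(K_3^-) → 3/2 as n → ∞, i.e., π(K_3^-) = 3/2. -/
open Finset Filter

structure ColGraph (k r n : ℕ) where
  E : Fin k → Finset (Finset (Fin n))
  card_mem : ∀ i : Fin k, ∀ e ∈ E i, e.card = r

namespace ColGraph

def IsSubgraph {k r m n : ℕ} (H : ColGraph k r m) (G : ColGraph k r n) : Prop :=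
  ∃ f : Fin m → Fin n, Function.Injective f ∧
    ∀ i : Fin k, ∀ e ∈ H.E i, e.image f ∈ G.E i

noncomputable def density {k r n : ℕ} (G : ColGraph k r n) : ℝ :=
  (∑ i : Fin k, ((G.E i).card : ℝ)) / (n.choose r : ℝ)

noncomputable def turanDensityN {k r m : ℕ} (H : ColGraph k r m) (n : ℕ) : ℝ :=
  sSup {x : ℝ | ∃ G : ColGraph k r n, ¬ H.IsSubgraph G ∧ G.density = x}

def IsHom {k r m p : ℕ} (G : ColGraph k r m) (H : ColGraph k r p) (f : Fin m → Fin p) : Prop :=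
  ∀ i : Fin k, ∀ e ∈ G.E i, Set.InjOn f ↑e ∧ e.image f ∈ H.E i

def Colorable {k r m p : ℕ} (G : ColGraph k r m) (H : ColGraph k r p) : Prop :=
  ∃ f : Fin m → Fin p, G.IsHom H f

def blowUp {k r m : ℕ} (H : ColGraph k r m) (s : ℕ) : ColGraph k r (m * s) where
  E i := Finset.univ.filter (fun e : Finset (Fin (m * s)) =>
    e.card = r ∧ e.image (fun x => (finProdFinEquiv.symm x).1) ∈ H.E i)
  card_mem i e he := (Finset.mem_filter.mp he).2.1

end ColGraph

noncomputable def famTuranDensityN {k r : ℕ} {ι : Type*} {v : ι → ℕ}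
    (Hs : ∀ i, ColGraph k r (v i)) (n : ℕ) : ℝ :=
  sSup {x : ℝ | ∃ G : ColGraph k r n, (∀ i, ¬ (Hs i).IsSubgraph G) ∧ G.density = x}

def prodGraph {m p : ℕ} (G₁ : ColGraph 2 2 m) (G₂ : ColGraph 2 2 p) : ColGraph 2 2 (m * p) where
  E i := Finset.univ.filter (fun e : Finset (Fin (m * p)) =>
    e.card = 2 ∧ e.image (fun x => (finProdFinEquiv.symm x).1) ∈ G₁.E i ∧
      e.image (fun x => (finProdFinEquiv.symm x).2) ∈ G₂.E i)
  card_mem i e he := (Finset.mem_filter.mp he).2.1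

def IsBipartite {n : ℕ} (G : ColGraph 2 2 n) : Prop :=
  ∀ i : Fin 2, ∃ part : Fin n → Bool, ∀ e ∈ G.E i, ∃ u ∈ e, ∃ v ∈ e, part u ≠ part v

def mk2 {n : ℕ} (R B : Finset (Finset (Fin n)))
    (hR : ∀ e ∈ R, e.card = 2) (hB : ∀ e ∈ B, e.card = 2) : ColGraph 2 2 n where
  E := fun i => if i = 0 then R else B
  card_mem := by
    intro i e he
    split at he
    · exact hR e he
    · exact hB e he

def Tgraph : ColGraph 2 2 4 :=
  mk2 {{0,1},{0,2},{2,3}} {{0,1},{1,2},{2,3}} (by decide) (by decide)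

def K3 : ColGraph 2 2 3 :=
  mk2 {{0,1},{0,2},{1,2}} {{0,1},{0,2},{1,2}} (by decide) (by decide)

def K3minus : ColGraph 2 2 3 :=
  mk2 {{0,1},{0,2},{1,2}} {{0,1},{0,2}} (by decide) (by decide)

def T1 : ColGraph 2 2 4 :=
  mk2 {{0,1},{2,3},{0,2},{1,3}} {{0,1},{2,3},{0,3},{1,2}} (by decide) (by decide)

def T2 : ColGraph 2 2 4 :=
  mk2 {{0,1},{0,3},{1,2},{1,3},{2,3}} {{0,1},{0,2},{0,3},{1,2},{2,3}} (by decide) (by decide)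

set_option maxRecDepth 40000 in
def H8 : ColGraph 2 2 8 :=
  mk2 {{0,1},{0,2},{1,3},{2,3},{0,5},{2,6},{3,7},{1,4},{2,4},{0,7},{3,5},{1,6}}
      {{4,5},{4,6},{5,7},{6,7},{1,5},{0,4},{3,6},{2,7},{2,4},{0,7},{3,5},{1,6}}
      (by decide) (by decide)

structure Graph23 (n : ℕ) where
  E2 : Finset (Finset (Fin n))
  E3 : Finset (Finset (Fin n))
  card2 : ∀ e ∈ E2, e.card = 2
  card3 : ∀ e ∈ E3, e.card = 3

namespace Graph23

noncomputable def density {n : ℕ} (G : Graph23 n) : ℝ :=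
  (G.E2.card : ℝ) / (n.choose 2 : ℝ) + (G.E3.card : ℝ) / (n.choose 3 : ℝ)

def IsSubgraph {m n : ℕ} (H : Graph23 m) (G : Graph23 n) : Prop :=
  ∃ f : Fin m → Fin n, Function.Injective f ∧
    (∀ e ∈ H.E2, e.image f ∈ G.E2) ∧ (∀ e ∈ H.E3, e.image f ∈ G.E3)

noncomputable def turanDensityN {m : ℕ} (H : Graph23 m) (n : ℕ) : ℝ :=
  sSup {x : ℝ | ∃ G : Graph23 n, ¬ H.IsSubgraph G ∧ G.density = x}

end Graph23

def lift23 {m : ℕ} (H : ColGraph 2 2 m) : Graph23 (m + 1) where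
  E2 := (H.E 0).image (fun e => e.image Fin.castSucc)
  E3 := (H.E 1).image (fun e => insert (Fin.last m) (e.image Fin.castSucc))
  card2 := by
    intro e he
    simp only [Finset.mem_image] at he
    obtain ⟨e0, he0, rfl⟩ := he
    rw [Finset.card_image_of_injective _ (Fin.castSucc_injective m)]
    exact H.card_mem 0 e0 he0
  card3 := by
    intro e he
    simp only [Finset.mem_image] at he
    obtain ⟨e0, he0, rfl⟩ := he
    rw [Finset.card_insert_of_notMem (by
      intro h
      simp only [Finset.mem_image] at h
      obtain ⟨x, _, hx⟩ := h
      exact (Fin.castSucc_lt_last x).ne hx)]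
    rw [Finset.card_image_of_injective _ (Fin.castSucc_injective m), H.card_mem 1 e0 he0]

def H5 : Graph23 5 where
  E2 := {{0,1},{0,2},{2,3}}
  E3 := {{0,1,4},{0,2,4},{2,3,4}}
  card2 := by decide
  card3 := by decide

/-! A `K₃⁻`-free 2-coloured graph cannot contain a triangle of edges that are both red and blue,
so by Mantel's theorem (Turán's theorem for triangles) at most `n²/4` pairs carry both colours,
while every other pair carries at most one. Hence `|R| + |B| ≤ C(n,2) + n²/4`, i.e. the density is
at most `3/2 + O(1/n)`. Conversely, colouring a balanced complete bipartite graph red and the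
complete graph blue gives a `K₃⁻`-free graph (every red triangle would be a triangle of the
bipartite graph) of density `1 + ⌊n²/4⌋ / C(n,2) ≥ 3/2`. -/

theorem Sym2.toFinset_injective {α : Type*} [DecidableEq α] :
    Function.Injective (Sym2.toFinset : Sym2 α → Finset α) :=
  fun _ _ h => Sym2.ext fun x => by rw [← Sym2.mem_toFinset, h, Sym2.mem_toFinset]

namespace SimpleGraph

variable {V : Type*} [Fintype V]

theorem CliqueFree.four_mul_card_edgeFinset_le {G : SimpleGraph V} [DecidableRel G.Adj]
    (h : G.CliqueFree 3) : 4 * #G.edgeFinset ≤ Fintype.card V ^ 2 := by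
  have turan : #G.edgeFinset ≤ _ := CliqueFree.card_edgeFinset_le (r := 2) h
  rw [Nat.choose_eq_zero_of_lt (Nat.mod_lt _ two_pos)] at turan
  simp only [Nat.add_one_sub_one, mul_one, add_zero] at turan
  omega

variable [DecidableEq V]

def edgePairs (G : SimpleGraph V) [DecidableRel G.Adj] : Finset (Finset V) :=
  G.edgeFinset.image Sym2.toFinset

variable (G : SimpleGraph V) [DecidableRel G.Adj]

theorem card_edgePairs : #G.edgePairs = #G.edgeFinset :=
  card_image_of_injective _ Sym2.toFinset_injective

theorem pair_mem_edgePairs {a b : V} : {a, b} ∈ G.edgePairs ↔ G.Adj a b := by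
  rw [edgePairs, ← Sym2.toFinset_mk_eq, Sym2.toFinset_injective.mem_finset_image, mem_edgeFinset,
    mem_edgeSet]

theorem card_of_mem_edgePairs {e : Finset V} (he : e ∈ G.edgePairs) : #e = 2 := by
  obtain ⟨z, hz, rfl⟩ := mem_image.mp he
  exact Sym2.card_toFinset_of_not_isDiag z (G.not_isDiag_of_mem_edgeSet (mem_edgeFinset.mp hz))

theorem subset_edgePairs_fromRel (D : Finset (Finset V)) (hD : ∀ e ∈ D, #e = 2) :
    D ⊆ (fromRel fun a b => {a, b} ∈ D).edgePairs := by
  intro e he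
  obtain ⟨a, b, hab, rfl⟩ := card_eq_two.mp (hD e he)
  exact (pair_mem_edgePairs _).mpr ((fromRel_adj ..).mpr ⟨hab, .inl he⟩)

end SimpleGraph

namespace ColGraph

variable {k r m n : ℕ}

theorem E_subset_powersetCard (G : ColGraph k r n) (i : Fin k) : G.E i ⊆ powersetCard r univ :=
  fun e he => mem_powersetCard_univ.mpr (G.card_mem i e he)

theorem ne_of_pair_mem (G : ColGraph k 2 n) {i : Fin k} {a b : Fin n}
    (h : {a, b} ∈ G.E i) : a ≠ b := by
  rintro rfl
  simpa using G.card_mem i _ h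

theorem density_le_card (G : ColGraph k r n) : G.density ≤ k := by
  have hcard : ∀ i, #(G.E i) ≤ n.choose r := fun i => by
    simpa using card_le_card (G.E_subset_powersetCard i)
  rcases (n.choose r).eq_zero_or_pos with h0 | hpos
  · simp [density, h0]
  rw [density, div_le_iff₀ (by exact_mod_cast hpos)]
  calc ∑ i, (#(G.E i) : ℝ) ≤ ∑ _i : Fin k, (n.choose r : ℝ) := by
        gcongr with i; exact_mod_cast hcard i
    _ = k * n.choose r := by simp

theorem density_le_turanDensityN (H : ColGraph k r m) {G : ColGraph k r n}
    (hG : ¬ H.IsSubgraph G) : G.density ≤ H.turanDensityN n :=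
  le_csSup ⟨k, by rintro _ ⟨G', -, rfl⟩; exact G'.density_le_card⟩ ⟨G, hG, rfl⟩

theorem turanDensityN_le (H : ColGraph k r m) {c : ℝ} (hc : 0 ≤ c)
    (h : ∀ G : ColGraph k r n, ¬ H.IsSubgraph G → G.density ≤ c) : H.turanDensityN n ≤ c :=
  Real.sSup_le (by rintro _ ⟨G, hG, rfl⟩; exact h G hG) hc

def ofGraphs (R B : SimpleGraph (Fin n)) [DecidableRel R.Adj] [DecidableRel B.Adj] :
    ColGraph 2 2 n :=
  mk2 R.edgePairs B.edgePairs (fun _ => R.card_of_mem_edgePairs) (fun _ => B.card_of_mem_edgePairs)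

section ofGraphs

variable (R B : SimpleGraph (Fin n)) [DecidableRel R.Adj] [DecidableRel B.Adj]

theorem ofGraphs_E_zero : (ofGraphs R B).E 0 = R.edgePairs := rfl

theorem ofGraphs_E_one : (ofGraphs R B).E 1 = B.edgePairs := rfl

theorem density_ofGraphs :
    (ofGraphs R B).density = (#R.edgeFinset + #B.edgeFinset : ℝ) / n.choose 2 := by
  rw [density, Fin.sum_univ_two, ofGraphs_E_zero, ofGraphs_E_one, R.card_edgePairs,
    B.card_edgePairs]

end ofGraphs

end ColGraph

theorem K3minus_isSubgraph_iff {n : ℕ} (G : ColGraph 2 2 n) :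
    K3minus.IsSubgraph G ↔ ∃ a b c : Fin n, {a, b} ∈ G.E 0 ∧ {a, c} ∈ G.E 0 ∧ {b, c} ∈ G.E 0 ∧
      {a, b} ∈ G.E 1 ∧ {a, c} ∈ G.E 1 := by
  constructor
  · rintro ⟨f, -, hf⟩
    have hpair : ∀ i (x y : Fin 3), {x, y} ∈ K3minus.E i → {f x, f y} ∈ G.E i := fun i x y h => by
      simpa [image_insert] using hf i _ h
    exact ⟨f 0, f 1, f 2, hpair 0 0 1 (by decide), hpair 0 0 2 (by decide),
      hpair 0 1 2 (by decide), hpair 1 0 1 (by decide), hpair 1 0 2 (by decide)⟩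
  · rintro ⟨a, b, c, hab, hac, hbc, hab', hac'⟩
    have hne_ab := G.ne_of_pair_mem hab
    have hne_ac := G.ne_of_pair_mem hac
    have hne_bc := G.ne_of_pair_mem hbc
    refine ⟨![a, b, c], ?_, ?_⟩
    · intro i j hij
      fin_cases i <;> fin_cases j <;> simp_all [eq_comm]
    · intro i e he
      fin_cases i
      · obtain rfl | rfl | rfl : e = {0, 1} ∨ e = {0, 2} ∨ e = {1, 2} := by
          simpa [K3minus, mk2] using he
        all_goals simpa [image_insert]
      · obtain rfl | rfl : e = {0, 1} ∨ e = {0, 2} := by simpa [K3minus, mk2] using he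
        all_goals simpa [image_insert]

open SimpleGraph ColGraph

theorem four_mul_card_add_card_le_of_K3minus_free {n : ℕ} {G : ColGraph 2 2 n}
    (hG : ¬ K3minus.IsSubgraph G) : 4 * (#(G.E 0) + #(G.E 1)) ≤ 4 * n.choose 2 + n ^ 2 := by
  classical
  set D := G.E 0 ∩ G.E 1
  let Γ := fromRel fun a b => {a, b} ∈ D
  have mem_of_adj {x y : Fin n} (h : Γ.Adj x y) : {x, y} ∈ G.E 0 ∧ {x, y} ∈ G.E 1 := by
    rw [← mem_inter]
    rcases ((fromRel_adj ..).mp h).2 with h | h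
    exacts [h, pair_comm x y ▸ h]
  have hΓ : Γ.CliqueFree 3 := by
    intro s hs
    obtain ⟨a, b, c, hab, hac, hbc, rfl⟩ := is3Clique_iff.mp hs
    exact hG <| (K3minus_isSubgraph_iff G).mpr ⟨a, b, c, (mem_of_adj hab).1, (mem_of_adj hac).1,
      (mem_of_adj hbc).1, (mem_of_adj hab).2, (mem_of_adj hac).2⟩
  have hD : 4 * #D ≤ n ^ 2 := by
    have hsub := subset_edgePairs_fromRel D fun e he => G.card_mem 0 e (mem_inter.mp he).1
    simpa using (Nat.mul_le_mul_left 4 ((card_le_card hsub).trans_eq (card_edgePairs Γ))).trans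
      hΓ.four_mul_card_edgeFinset_le
  have hU : #(G.E 0 ∪ G.E 1) ≤ n.choose 2 := by
    simpa using
      card_le_card (union_subset (G.E_subset_powersetCard 0) (G.E_subset_powersetCard 1))
  have hUD : #(G.E 0 ∪ G.E 1) + #D = #(G.E 0) + #(G.E 1) := card_union_add_card_inter _ _
  omega

theorem density_le_of_K3minus_free {n : ℕ} (hn : 2 ≤ n) {G : ColGraph 2 2 n}
    (hG : ¬ K3minus.IsSubgraph G) : G.density ≤ 3 / 2 + 1 / n := by
  have hcount : (4 * (#(G.E 0) + #(G.E 1)) : ℝ) ≤ 4 * (n * (n - 1) / 2) + n ^ 2 := by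
    rw [← Nat.cast_choose_two]
    exact_mod_cast four_mul_card_add_card_le_of_K3minus_free hG
  have hn' : (2 : ℝ) ≤ n := by exact_mod_cast hn
  rw [density, Fin.sum_univ_two, Nat.cast_choose_two, div_le_iff₀ (by nlinarith)]
  have hrhs : (3 / 2 + 1 / (n : ℝ)) * (n * (n - 1) / 2) = 3 * n * (n - 1) / 4 + (n - 1) / 2 := by
    field_simp
    ring
  rw [hrhs]
  nlinarith

theorem K3minus_free_ofGraphs_turanGraph (n : ℕ) :
    ¬ K3minus.IsSubgraph (ofGraphs (turanGraph n 2) ⊤) := by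
  rw [K3minus_isSubgraph_iff]
  rintro ⟨a, b, c, hab, hac, hbc, -, -⟩
  simp only [ofGraphs_E_zero, pair_mem_edgePairs] at hab hac hbc
  exact turanGraph_cliqueFree two_pos {a, b, c} (is3Clique_triple_iff.mpr ⟨hab, hac, hbc⟩)

theorem sq_le_four_mul_card_edgeFinset_turanGraph_add (n : ℕ) :
    n ^ 2 ≤ 4 * #(turanGraph n 2).edgeFinset + n := by
  rw [card_edgeFinset_turanGraph]
  obtain ⟨k, rfl | rfl⟩ := Nat.even_or_odd' n
  · have : (2 * k) ^ 2 = 4 * k ^ 2 := by ring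
    simp [this]
  · have : (2 * k + 1) ^ 2 = 4 * (k ^ 2 + k) + 1 := by ring
    simp [this, Nat.add_mod]

theorem three_halves_le_density_ofGraphs_turanGraph {n : ℕ} (hn : 2 ≤ n) :
    3 / 2 ≤ (ofGraphs (turanGraph n 2) ⊤).density := by
  have hT : (n ^ 2 : ℝ) ≤ 4 * #(turanGraph n 2).edgeFinset + n := by
    exact_mod_cast sq_le_four_mul_card_edgeFinset_turanGraph_add n
  have hn' : (2 : ℝ) ≤ n := by exact_mod_cast hn
  rw [density_ofGraphs, card_edgeFinset_top_eq_card_choose_two, Fintype.card_fin,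
    Nat.cast_choose_two, le_div_iff₀ (by nlinarith)]
  linarith

theorem K3minus_turan_density :
    Filter.Tendsto K3minus.turanDensityN Filter.atTop (nhds (3 / 2)) := by
  have hupper : Tendsto (fun n : ℕ => 3 / 2 + 1 / (n : ℝ)) atTop (nhds (3 / 2)) := by
    simpa using tendsto_const_nhds.add (tendsto_one_div_atTop_nhds_zero_nat (𝕜 := ℝ))
  refine tendsto_of_tendsto_of_tendsto_of_le_of_le' tendsto_const_nhds hupper ?_ ?_
  all_goals filter_upwards [eventually_ge_atTop 2] with n hn
  · exact (three_halves_le_density_ofGraphs_turanGraph hn).trans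
      (K3minus.density_le_turanDensityN (K3minus_free_ofGraphs_turanGraph n))
  · exact K3minus.turanDensityN_le (by positivity) fun G hG => density_le_of_K3minus_free hn hG
end

section
/- Let T_1 be the 2-colored graph with vertex set {1,2,3,4}, red edges {12, 34, 13, 24} and blue edges {12, 34, 14, 23}, and let T_2 be the 2-colored graph with vertex set {1,2,3,4}, red edges {12, 14, 23, 24, 34} and blue edges {12, 13, 14, 23, 34}. Then π({T_1, T_2}) ≤ 4/3: for every ε > 0 there exists n_0 such that for all n ≥ n_0, every 2-colored graph G on n vertices containing neither T_1 nor T_2 as a subgraph satisfies |E_r(G)| + |E_b(G)| ≤ (4/3 + ε)·C(n,2). -/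
open Finset Filter

/-!
Let `D` be the graph of pairs coloured both red and blue and `N` the graph of uncoloured pairs,
so that `|E_r| + |E_b| = C(n,2) + |D| - |N|`. If `x u y w` is a 4-cycle of `D` whose diagonals
`xy`, `uw` are both coloured, then the four colour patterns of the diagonals give a copy of `T₁`
(diagonals of equal colour) or of `T₂`. So in a `{T₁, T₂}`-free graph every 4-cycle of `D` has a
diagonal in `N`. For any two disjoint graphs with this property,
`3 d_D(V) ≤ 3 d_N(V) + |V|² + 18|V|`, where `d` counts ordered adjacent pairs inside `V`.
This is proved by induction on `V`, removing a `D`-triangle, a single vertex with small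
`D`-degree minus `N`-degree, or, when every vertex has large excess (and there is no triangle),
the two ends of a `D`-edge `xy`: a `D`-neighbour `z ≠ x` of `y` with `xz ∉ N` exists, and the
4-cycle condition confines the `D`-neighbourhood of `z`.
-/

namespace Finset

variable {α : Type*} [DecidableEq α]

lemma card_add_card_add_card_le (A B C : Finset α) :
    #A + #B + #C ≤ #(A ∪ B ∪ C) + #(A ∩ B) + #(A ∩ C) + #(B ∩ C) := by
  have hAB := card_union_add_card_inter A B
  have hABC := card_union_add_card_inter (A ∪ B) C
  have hC : #((A ∪ B) ∩ C) ≤ #(A ∩ C) + #(B ∩ C) := by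
    rw [union_inter_distrib_right]
    exact card_union_le _ _
  omega

end Finset

namespace SimpleGraph

variable {α : Type*}

section Counting

variable (G : SimpleGraph α) [DecidableRel G.Adj]

def neighborsIn (V : Finset α) (v : α) : Finset α := {w ∈ V | G.Adj v w}

def dartCount (V : Finset α) : ℕ := ∑ v ∈ V, #(G.neighborsIn V v)

variable {G} {T V : Finset α} {v w : α}

@[simp]
lemma mem_neighborsIn : w ∈ G.neighborsIn V v ↔ w ∈ V ∧ G.Adj v w := mem_filter

lemma neighborsIn_subset : G.neighborsIn V v ⊆ V := filter_subset _ _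

lemma card_neighborsIn_sdiff_add [DecidableEq α] (hT : T ⊆ V) (v : α) :
    #(G.neighborsIn (V \ T) v) + #(G.neighborsIn T v) = #(G.neighborsIn V v) := by
  unfold neighborsIn
  rw [← card_union_of_disjoint (disjoint_filter_filter sdiff_disjoint), ← filter_union,
    sdiff_union_of_subset hT]

lemma sum_card_neighborsIn_comm (S T : Finset α) :
    ∑ s ∈ S, #(G.neighborsIn T s) = ∑ t ∈ T, #(G.neighborsIn S t) := by
  simpa [bipartiteAbove, bipartiteBelow, neighborsIn, G.adj_comm] using
    sum_card_bipartiteAbove_eq_sum_card_bipartiteBelow (s := S) (t := T) (r := G.Adj)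

lemma dartCount_add_dartCount [DecidableEq α] (hT : T ⊆ V) :
    G.dartCount V + G.dartCount T = G.dartCount (V \ T) + 2 * ∑ t ∈ T, #(G.neighborsIn V t) := by
  have hsplit := fun v => (card_neighborsIn_sdiff_add (G := G) hT v).symm
  have hV : G.dartCount V = ∑ v ∈ V \ T, #(G.neighborsIn V v) + ∑ t ∈ T, #(G.neighborsIn V t) :=
    (sum_sdiff hT).symm
  simp only [dartCount, hsplit, sum_add_distrib, sum_card_neighborsIn_comm (V \ T) T] at hV ⊢
  omega

lemma dartCount_le_sq (T : Finset α) : G.dartCount T ≤ #T ^ 2 :=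
  calc G.dartCount T ≤ ∑ _t ∈ T, #T := sum_le_sum fun _ _ => card_le_card neighborsIn_subset
    _ = #T ^ 2 := by rw [sum_const, smul_eq_mul, sq]

variable (G)

lemma dartCount_univ [Fintype α] : G.dartCount univ = 2 * #G.edgeFinset := by
  rw [← G.sum_degrees_eq_twice_card_edges]
  refine sum_congr rfl fun v _ => ?_
  rw [← card_neighborFinset_eq_degree, neighborFinset_eq_filter]
  rfl

lemma dartCount_compl_add_dartCount [DecidableEq α] (V : Finset α) :
    Gᶜ.dartCount V + G.dartCount V = #V * (#V - 1) := by
  rw [dartCount, dartCount, ← sum_add_distrib, ← smul_eq_mul, ← sum_const]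
  refine sum_congr rfl fun v hv => ?_
  rw [← card_erase_of_mem hv, add_comm,
    ← card_filter_add_card_filter_not (s := V.erase v) (p := (G.Adj v ·))]
  congr 2 <;> ext w
  · simp only [neighborsIn, mem_filter, mem_erase, ne_comm (a := w)]
    exact ⟨fun h => ⟨⟨G.ne_of_adj h.2, h.1⟩, h.2⟩, fun h => ⟨h.1.2, h.2⟩⟩
  · simp only [neighborsIn, mem_filter, mem_erase, compl_adj, ne_comm (a := w)]
    tauto

end Counting

section Peeling

variable (D N : SimpleGraph α) [DecidableRel D.Adj] [DecidableRel N.Adj]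

/-- Removing `T` from `V` does not increase `3 d_D(V) - 3 d_N(V) - |V|² - 18|V|`, by
`dartCount_add_dartCount` together with `d_D(T) ≥ 0` and `d_N(T) ≤ |T|²`. -/
def Peelable (V T : Finset α) : Prop :=
  6 * ∑ t ∈ T, #(D.neighborsIn V t) + 4 * #T ^ 2 ≤
    6 * ∑ t ∈ T, #(N.neighborsIn V t) + 2 * #T * #V + 18 * #T

theorem three_mul_dartCount_le [DecidableEq α]
    (hpeel : ∀ V : Finset α, V.Nonempty → ∃ T ⊆ V, T.Nonempty ∧ Peelable D N V T)
    (V : Finset α) : 3 * D.dartCount V ≤ 3 * N.dartCount V + #V ^ 2 + 18 * #V := by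
  induction V using Finset.strongInduction with
  | H V ih =>
  rcases V.eq_empty_or_nonempty with rfl | hV
  · simp [dartCount]
  obtain ⟨T, hTV, hT, hpeelT⟩ := hpeel V hV
  have ihW := ih (V \ T) (sdiff_ssubset hTV hT)
  have hD := D.dartCount_add_dartCount hTV
  have hN := N.dartCount_add_dartCount hTV
  have hNT := N.dartCount_le_sq T
  have hcard : #(V \ T) + #T = #V := card_sdiff_add_card_eq_card hTV
  unfold Peelable at hpeelT
  rw [← hcard] at hpeelT ⊢
  nlinarith

end Peeling

section FourCycles

def FourCyclesHaveDiagonal (D N : SimpleGraph α) : Prop :=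
  ∀ ⦃x u y w : α⦄, D.Adj x u → D.Adj u y → D.Adj y w → D.Adj w x → x ≠ y → u ≠ w →
    N.Adj x y ∨ N.Adj u w

variable {D N : SimpleGraph α} [DecidableRel D.Adj] [DecidableRel N.Adj] {V : Finset α}
  {x y z : α}

lemma inter_neighborsIn_subset [DecidableEq α] (h : FourCyclesHaveDiagonal D N) (hxy : x ≠ y)
    (hN : ¬ N.Adj x y) (hxz : D.Adj x z) (hyz : D.Adj y z) (hz : z ∈ V) :
    D.neighborsIn V x ∩ D.neighborsIn V y ⊆ insert z (N.neighborsIn V z) := by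
  intro s hs
  simp only [mem_inter, mem_neighborsIn] at hs
  obtain ⟨⟨hsV, hxs⟩, -, hys⟩ := hs
  rcases eq_or_ne s z with rfl | hsz
  · exact mem_insert_self _ _
  · have hNsz := (h hxs hys.symm hyz hxz.symm hxy hsz).resolve_left hN
    exact mem_insert_of_mem (mem_neighborsIn.mpr ⟨hsV, hNsz.symm⟩)

lemma card_inter_neighborsIn_le [DecidableEq α] (h : FourCyclesHaveDiagonal D N) (hxy : x ≠ y)
    (hN : ¬ N.Adj x y) (hxz : D.Adj x z) (hyz : D.Adj y z) (hz : z ∈ V) :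
    #(D.neighborsIn V x ∩ D.neighborsIn V y) ≤ #(N.neighborsIn V z) + 1 :=
  (card_le_card (inter_neighborsIn_subset h hxy hN hxz hyz hz)).trans (card_insert_le _ _)

lemma peelable_triangle [DecidableEq α] (h : FourCyclesHaveDiagonal D N) (hDN : Disjoint D N)
    (hx : x ∈ V) (hy : y ∈ V) (hz : z ∈ V) (hxy : D.Adj x y) (hxz : D.Adj x z)
    (hyz : D.Adj y z) : Peelable D N V {x, y, z} := by
  have hnot {a b : α} (hab : D.Adj a b) : ¬ N.Adj a b := disjoint_left.mp hDN a b hab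
  have hxy' := card_inter_neighborsIn_le (V := V) h hxy.ne (hnot hxy) hxz hyz hz
  have hxz' := card_inter_neighborsIn_le (V := V) h hxz.ne (hnot hxz) hxy hyz.symm hy
  have hyz' := card_inter_neighborsIn_le (V := V) h hyz.ne (hnot hyz) hxy.symm hxz.symm hx
  have hunion : #(D.neighborsIn V x ∪ D.neighborsIn V y ∪ D.neighborsIn V z) ≤ #V :=
    card_le_card (union_subset (union_subset neighborsIn_subset neighborsIn_subset)
      neighborsIn_subset)
  have hsum := card_add_card_add_card_le (D.neighborsIn V x) (D.neighborsIn V y)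
    (D.neighborsIn V z)
  have hx_notMem : x ∉ ({y, z} : Finset α) := by simp [hxy.ne, hxz.ne]
  unfold Peelable
  rw [sum_insert hx_notMem, sum_pair hyz.ne, sum_insert hx_notMem, sum_pair hyz.ne,
    card_insert_of_notMem hx_notMem, card_pair hyz.ne]
  omega

/-- `hheavy` says that no single vertex of `V` is peelable. -/
lemma peelable_pair_of_heavy [DecidableEq α] (h : FourCyclesHaveDiagonal D N)
    (hfree : ∀ a ∈ V, ∀ b ∈ V, D.Adj a b → Disjoint (D.neighborsIn V a) (D.neighborsIn V b))
    (hheavy : ∀ a ∈ V, 6 * #(N.neighborsIn V a) + 2 * #V + 15 ≤ 6 * #(D.neighborsIn V a))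
    (hx : x ∈ V) (hy : y ∈ V) (hxy : D.Adj x y) : Peelable D N V {x, y} := by
  have hx_heavy := hheavy x hx
  have hy_heavy := hheavy y hy
  set A := D.neighborsIn V y
  set B := D.neighborsIn V x
  have hAB : Disjoint A B := hfree y hy x hx hxy.symm
  have hABV : #A + #B ≤ #V := by
    rw [← card_union_of_disjoint hAB]
    exact card_le_card (union_subset neighborsIn_subset neighborsIn_subset)
  have hxA : x ∈ A := mem_neighborsIn.mpr ⟨hx, hxy.symm⟩
  obtain ⟨z, hzA, hzx, hNxz⟩ : ∃ z ∈ A, z ≠ x ∧ ¬ N.Adj x z := by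
    by_contra! hall
    have hsub : A.erase x ⊆ N.neighborsIn V x := fun z hz =>
      mem_neighborsIn.mpr ⟨neighborsIn_subset (mem_of_mem_erase hz),
        hall z (mem_of_mem_erase hz) (ne_of_mem_erase hz)⟩
    have := card_le_card hsub
    have := card_erase_add_one hxA
    omega
  obtain ⟨hzV, hyz⟩ := mem_neighborsIn.mp hzA
  have hz_heavy := hheavy z hzV
  set C := D.neighborsIn V z
  have hCB : #(C ∩ B) ≤ #(N.neighborsIn V y) + 1 :=
    card_inter_neighborsIn_le h hzx (fun h' => hNxz h'.symm) hyz.symm hxy hy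
  have hCBV : #(C \ B) + (#A + #B) ≤ #V := by
    rw [← card_union_of_disjoint hAB, ← card_union_of_disjoint
      (disjoint_union_right.mpr ⟨(hfree z hzV y hy hyz.symm).mono_left sdiff_subset,
        sdiff_disjoint⟩)]
    exact card_le_card (union_subset (sdiff_subset.trans neighborsIn_subset)
      (union_subset neighborsIn_subset neighborsIn_subset))
  have hC := card_inter_add_card_sdiff C B
  unfold Peelable
  rw [sum_pair hxy.ne, sum_pair hxy.ne, card_pair hxy.ne]
  omega

theorem exists_peelable [DecidableEq α] (h : FourCyclesHaveDiagonal D N) (hDN : Disjoint D N)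
    (hV : V.Nonempty) : ∃ T ⊆ V, T.Nonempty ∧ Peelable D N V T := by
  by_cases htri : ∃ a ∈ V, ∃ b ∈ V, D.Adj a b ∧
      ¬ Disjoint (D.neighborsIn V a) (D.neighborsIn V b)
  · obtain ⟨a, ha, b, hb, hab, hnd⟩ := htri
    obtain ⟨c, hca, hcb⟩ := not_disjoint_iff.mp hnd
    obtain ⟨hc, hac⟩ := mem_neighborsIn.mp hca
    refine ⟨{a, b, c}, ?_, insert_nonempty _ _,
      peelable_triangle h hDN ha hb hc hab hac (mem_neighborsIn.mp hcb).2⟩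
    simp [insert_subset_iff, ha, hb, hc]
  push Not at htri
  by_cases hlight : ∃ v ∈ V, Peelable D N V {v}
  · obtain ⟨v, hv, hpeel⟩ := hlight
    exact ⟨{v}, singleton_subset_iff.mpr hv, singleton_nonempty v, hpeel⟩
  push Not at hlight
  have hheavy : ∀ a ∈ V, 6 * #(N.neighborsIn V a) + 2 * #V + 15 ≤ 6 * #(D.neighborsIn V a) := by
    intro a ha
    have := hlight a ha
    simp only [Peelable, sum_singleton, card_singleton] at this
    omega
  obtain ⟨v, hv⟩ := hV
  obtain ⟨u, hu⟩ : (D.neighborsIn V v).Nonempty := card_pos.mp (by have := hheavy v hv; omega)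
  obtain ⟨huV, hvu⟩ := mem_neighborsIn.mp hu
  refine ⟨{u, v}, ?_, insert_nonempty _ _, peelable_pair_of_heavy h htri hheavy huV hv hvu.symm⟩
  simp [insert_subset_iff, huV, hv]

end FourCycles

end SimpleGraph

section PairGraph

variable {α : Type*} [DecidableEq α]

def pairGraph (S : Finset (Finset α)) : SimpleGraph α where
  Adj a b := a ≠ b ∧ {a, b} ∈ S
  symm := ⟨fun a b h => ⟨h.1.symm, pair_comm a b ▸ h.2⟩⟩
  loopless := ⟨fun _ h => h.1 rfl⟩

instance (S : Finset (Finset α)) : DecidableRel (pairGraph S).Adj :=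
  fun a b => inferInstanceAs (Decidable (a ≠ b ∧ {a, b} ∈ S))

lemma dartCount_univ_pairGraph [Fintype α] {S : Finset (Finset α)} (hS : ∀ e ∈ S, #e = 2) :
    (pairGraph S).dartCount univ = 2 * #S := by
  rw [SimpleGraph.dartCount_univ]
  congr 1
  refine card_bij (fun z _ => z.toFinset) ?_ ?_ ?_
  · intro z hz
    induction z using Sym2.ind with
    | h a b =>
      rw [SimpleGraph.mem_edgeFinset, SimpleGraph.mem_edgeSet] at hz
      rw [Sym2.toFinset_mk_eq]
      exact hz.2
  · intro z₁ _ z₂ _ h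
    exact Sym2.ext fun a => by rw [← Sym2.mem_toFinset, h, Sym2.mem_toFinset]
  · intro e he
    obtain ⟨a, b, hab, rfl⟩ := card_eq_two.mp (hS e he)
    exact ⟨s(a, b), SimpleGraph.mem_edgeFinset.mpr ⟨hab, he⟩, Sym2.toFinset_mk_eq⟩

end PairGraph

namespace ColGraph

variable {n : ℕ}

abbrev doubleGraph (G : ColGraph 2 2 n) : SimpleGraph (Fin n) := pairGraph (G.E 0 ∩ G.E 1)

abbrev nonEdgeGraph (G : ColGraph 2 2 n) : SimpleGraph (Fin n) := (pairGraph (G.E 0 ∪ G.E 1))ᶜ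

lemma disjoint_doubleGraph_nonEdgeGraph (G : ColGraph 2 2 n) :
    Disjoint G.doubleGraph G.nonEdgeGraph :=
  SimpleGraph.disjoint_left.mpr fun _ _ hD hN =>
    hN.2 ⟨hD.1, mem_union_left _ (mem_inter.mp hD.2).1⟩

lemma isSubgraph_mk2 {m : ℕ} {R B : Finset (Finset (Fin m))} {hR : ∀ e ∈ R, #e = 2}
    {hB : ∀ e ∈ B, #e = 2} {G : ColGraph 2 2 n} (f : Fin m → Fin n) (hf : Function.Injective f)
    (hRf : ∀ e ∈ R, e.image f ∈ G.E 0) (hBf : ∀ e ∈ B, e.image f ∈ G.E 1) :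
    (mk2 R B hR hB).IsSubgraph G :=
  ⟨f, hf, fun i => by fin_cases i; exacts [hRf, hBf]⟩

theorem fourCyclesHaveDiagonal_of_not_isSubgraph {G : ColGraph 2 2 n}
    (hT1 : ¬ T1.IsSubgraph G) (hT2 : ¬ T2.IsSubgraph G) :
    SimpleGraph.FourCyclesHaveDiagonal G.doubleGraph G.nonEdgeGraph := by
  intro x u y w hxu huy hyw hwx hxy huw
  by_contra! h
  have hcoloured {a b : Fin n} (hab : a ≠ b) (hN : ¬ G.nonEdgeGraph.Adj a b) :
      {a, b} ∈ G.E 0 ∨ {a, b} ∈ G.E 1 := by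
    simpa [pairGraph, hab, or_iff_not_imp_left] using hN
  simp only [doubleGraph, pairGraph, mem_inter] at hxu huy hyw hwx
  rcases hcoloured hxy h.1 with hxy' | hxy' <;> rcases hcoloured huw h.2 with huw' | huw'
  · refine hT1 (isSubgraph_mk2 ![x, u, y, w] ?_ ?_ ?_) <;>
      simp_all [Function.Injective, Fin.forall_fin_succ, pair_comm, Ne.symm]
  · refine hT2 (isSubgraph_mk2 ![u, x, w, y] ?_ ?_ ?_) <;>
      simp_all [Function.Injective, Fin.forall_fin_succ, pair_comm, Ne.symm]
  · refine hT2 (isSubgraph_mk2 ![x, u, y, w] ?_ ?_ ?_) <;>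
      simp_all [Function.Injective, Fin.forall_fin_succ, pair_comm, Ne.symm]
  · refine hT1 (isSubgraph_mk2 ![x, u, w, y] ?_ ?_ ?_) <;>
      simp_all [Function.Injective, Fin.forall_fin_succ, pair_comm, Ne.symm]

theorem six_mul_card_add_card_le {G : ColGraph 2 2 n} (hT1 : ¬ T1.IsSubgraph G)
    (hT2 : ¬ T2.IsSubgraph G) : 6 * (#(G.E 0) + #(G.E 1)) ≤ 8 * n.choose 2 + 19 * n := by
  have hbound := SimpleGraph.three_mul_dartCount_le G.doubleGraph G.nonEdgeGraph
    (fun _ hV => SimpleGraph.exists_peelable (fourCyclesHaveDiagonal_of_not_isSubgraph hT1 hT2)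
      G.disjoint_doubleGraph_nonEdgeGraph hV) univ
  have hD : G.doubleGraph.dartCount univ = 2 * #(G.E 0 ∩ G.E 1) :=
    dartCount_univ_pairGraph fun e he => G.card_mem 0 e (mem_inter.mp he).1
  have hN : G.nonEdgeGraph.dartCount univ + 2 * #(G.E 0 ∪ G.E 1) = n * (n - 1) := by
    have h := (pairGraph (G.E 0 ∪ G.E 1)).dartCount_compl_add_dartCount univ
    rwa [dartCount_univ_pairGraph fun e he =>
      (mem_union.mp he).elim (G.card_mem 0 e) (G.card_mem 1 e), card_univ, Fintype.card_fin] at h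
  have hUI := card_union_add_card_inter (G.E 0) (G.E 1)
  have hchoose : n * (n - 1) = n.choose 2 * 2 := by
    rw [Nat.choose_two_right, Nat.div_two_mul_two_of_even (Nat.even_mul_pred_self n)]
  have hsq : n ^ 2 = n * (n - 1) + n := by
    cases n <;> simp [sq, Nat.mul_succ]
  rw [card_univ, Fintype.card_fin, hD] at hbound
  omega

end ColGraph

theorem T1_T2_free_bound :
    ∀ ε : ℝ, 0 < ε → ∃ n₀ : ℕ, ∀ n : ℕ, n₀ ≤ n →
      ∀ G : ColGraph 2 2 n, ¬ T1.IsSubgraph G → ¬ T2.IsSubgraph G →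
        ((G.E 0).card + (G.E 1).card : ℝ) ≤ (4 / 3 + ε) * (n.choose 2 : ℝ) := by
  intro ε hε
  refine ⟨⌈19 / (3 * ε)⌉₊ + 1, fun n hn G hT1 hT2 => ?_⟩
  have hcount : 6 * (#(G.E 0) + #(G.E 1) : ℝ) ≤ 8 * n.choose 2 + 19 * n := by
    exact_mod_cast ColGraph.six_mul_card_add_card_le hT1 hT2
  have hn : 19 ≤ 3 * ε * ((n : ℝ) - 1) := by
    have hceil := Nat.le_ceil (19 / (3 * ε))
    have hn' : (⌈19 / (3 * ε)⌉₊ + 1 : ℝ) ≤ n := by exact_mod_cast hn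
    rw [div_le_iff₀ (by positivity)] at hceil
    nlinarith
  have hlin : 19 * (n : ℝ) ≤ 6 * ε * n.choose 2 := by
    rw [Nat.cast_choose_two]
    nlinarith [(n.cast_nonneg : (0 : ℝ) ≤ n)]
  linarith
end
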